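/- Let V be a finite set of nodes, t′ ∈ V, and let g : V × V → ℝ be antisymmetric with outflow_g(w) ≥ 0 for every w ≠ t′, and whose support {(u,v) : g(u,v) > 0} contains no directed cycle. Then for every dart (u₀,v₀) with g(u₀,v₀) > 0, there exist a node x with outflow_g(x) > 0 and a directed path from x to v₀ whose final dart is (u₀,v₀) and all of whose darts (u,v) satisfy g(u,v) > 0. (Every dart carrying positive flow of an acyclic preflow can be traced back along flow-carrying darts to a node with positive net outflow.) -/
import Mathlib


/-- inflow of a flow assignment at a node -/
def inflow {V : Type*} [Fintype V] (g : V → V → ℝ) (v : V) : ℝ := ∑ u, g u v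

/-- outflow of a flow assignment at a node -/
def outflow {V : Type*} [Fintype V] (g : V → V → ℝ) (v : V) : ℝ := - inflow g v

/-- Every dart carrying positive flow of an acyclic preflow can be traced back
along flow-carrying darts to a node with positive net outflow: there is a
directed path from such a node `x` to `v₀` whose final dart is `(u₀, v₀)` and
all of whose darts carry positive flow. -/
theorem trace_back_acyclic_preflow
    {V : Type*} [Fintype V]
    (g : V → V → ℝ) (t' : V)
    (hg_anti : ∀ u w, g u w = - g w u)
    (hg_out_nonneg : ∀ w, w ≠ t' → 0 ≤ outflow g w)
    (hg_acyclic : ¬ ∃ x : V, Relation.TransGen (fun u w => 0 < g u w) x x) :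
    ∀ u₀ v₀ : V, 0 < g u₀ v₀ →
      ∃ x : V, 0 < outflow g x ∧
        Relation.ReflTransGen (fun u w => 0 < g u w) x u₀ := by
  classical
  haveI : IsTrans V (Relation.TransGen (fun u w => 0 < g u w)) :=
    ⟨fun _ _ _ => Relation.TransGen.trans⟩
  haveI : IsIrrefl V (Relation.TransGen (fun u w => 0 < g u w)) :=
    ⟨fun x hx => hg_acyclic ⟨x, hx⟩⟩
  have hwf : WellFounded (Relation.TransGen (fun u w => 0 < g u w)) :=
    Finite.wellFounded_of_trans_of_irrefl _
  have main : ∀ u₀ : V, (∃ v₀, 0 < g u₀ v₀) →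
      ∃ x, 0 < outflow g x ∧ Relation.ReflTransGen (fun u w => 0 < g u w) x u₀ := by
    intro u₀
    induction u₀ using hwf.induction with
    | _ u₀ IH =>
      rintro ⟨v₀, hpos⟩
      by_cases hout : 0 < outflow g u₀
      · exact ⟨u₀, hout, Relation.ReflTransGen.refl⟩
      · push_neg at hout
        have hsum : 0 ≤ ∑ u, g u u₀ := by
          have h1 : outflow g u₀ = - ∑ u, g u u₀ := rfl
          linarith
        have hneg : g v₀ u₀ < 0 := by rw [hg_anti]; linarith
        have hex : ∃ u, 0 < g u u₀ := by
          by_contra hc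
          push_neg at hc
          have h1 : ∑ u, g u u₀ = g v₀ u₀ + ∑ u ∈ Finset.univ.erase v₀, g u u₀ :=
            (Finset.add_sum_erase _ _ (Finset.mem_univ v₀)).symm
          have h2 : ∑ u ∈ Finset.univ.erase v₀, g u u₀ ≤ 0 :=
            Finset.sum_nonpos fun u _ => hc u
          linarith
        obtain ⟨u, hu⟩ := hex
        obtain ⟨x, hx, hpath⟩ := IH u (Relation.TransGen.single hu) ⟨u₀, hu⟩
        exact ⟨x, hx, hpath.tail hu⟩
  intro u₀ v₀ h
  exact main u₀ ⟨v₀, h⟩
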